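/- arXiv:2308.12257 — 2 statements merged into one kernel-verified Lean document; each statement's English description precedes it below -/
import Mathlib

section
/- Let X be a distributive binary G-space. For each g ∈ G, the map Δ_g : X → X defined by Δ_g(x) = g(x,x) is a homeomorphism, with inverse Δ_{g⁻¹}. -/
/-!
Distributivity with `x' = x'' = x` gives `g(Δ_h x, Δ_h x) = h(x, g(x, x))`, so `Δ_g ∘ Δ_h = Δ_{hg}`.
Hence `Δ_g` and `Δ_{g⁻¹}` are mutually inverse, and both are continuous as restrictions of `α`.
-/

section DiagonalMap

variable {G X : Type*} (α : G → X → X → X)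

theorem act_diag_act_diag [Mul G]
    (hmul : ∀ (g h : G) (x x' : X), α (g * h) x x' = α g x (α h x x'))
    (hdist : ∀ (g h : G) (x x' x'' : X),
      α g (α h x x') (α h x x'') = α h x (α g x' x''))
    (a b : G) (x : X) :
    α a (α b x x) (α b x x) = α (b * a) x x := by
  rw [hdist, ← hmul]

theorem act_inv_diag_act_diag [Group G]
    (hmul : ∀ (g h : G) (x x' : X), α (g * h) x x' = α g x (α h x x'))
    (hone : ∀ (x x' : X), α (1 : G) x x' = x')
    (hdist : ∀ (g h : G) (x x' x'' : X),
      α g (α h x x') (α h x x'') = α h x (α g x' x''))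
    (g : G) (x : X) :
    α g⁻¹ (α g x x) (α g x x) = x := by
  rw [act_diag_act_diag α hmul hdist, mul_inv_cancel, hone]

theorem continuous_act_diag [TopologicalSpace G] [TopologicalSpace X]
    (hcont : Continuous fun p : G × X × X => α p.1 p.2.1 p.2.2) (g : G) :
    Continuous fun x : X => α g x x :=
  hcont.comp (continuous_const.prodMk (continuous_id.prodMk continuous_id))

end DiagonalMap

theorem delta_isHomeomorph_general
    {G X : Type*} [Group G] [TopologicalSpace G]
    [TopologicalSpace X]
    (α : G → X → X → X)
    (hcont : Continuous fun p : G × X × X => α p.1 p.2.1 p.2.2)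
    (hmul : ∀ (g h : G) (x x' : X), α (g * h) x x' = α g x (α h x x'))
    (hone : ∀ (x x' : X), α (1 : G) x x' = x')
    (hdist : ∀ (g h : G) (x x' x'' : X),
      α g (α h x x') (α h x x'') = α h x (α g x' x''))
    (g : G) :
    IsHomeomorph (fun x : X => α g x x) ∧
    (∀ x : X, α g⁻¹ (α g x x) (α g x x) = x) ∧
    (∀ x : X, α g (α g⁻¹ x x) (α g⁻¹ x x) = x) := by
  have hleft := act_inv_diag_act_diag α hmul hone hdist g
  have hright : ∀ x : X, α g (α g⁻¹ x x) (α g⁻¹ x x) = x := by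
    simpa only [inv_inv] using act_inv_diag_act_diag α hmul hone hdist g⁻¹
  let Δ : X ≃ₜ X :=
    { toFun := fun x => α g x x
      invFun := fun x => α g⁻¹ x x
      left_inv := hleft
      right_inv := hright
      continuous_toFun := continuous_act_diag α hcont g
      continuous_invFun := continuous_act_diag α hcont g⁻¹ }
  exact ⟨Δ.isHomeomorph, hleft, hright⟩

/-- In a distributive binary `G`-space, `Δ_g x = g(x,x)` is a homeomorphism
of `X` with inverse `Δ_{g⁻¹}`. -/
theorem delta_isHomeomorph
    {G X : Type*} [Group G] [TopologicalSpace G] [IsTopologicalGroup G]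
    [TopologicalSpace X]
    (α : G → X → X → X)
    (hcont : Continuous fun p : G × X × X => α p.1 p.2.1 p.2.2)
    (hmul : ∀ (g h : G) (x x' : X), α (g * h) x x' = α g x (α h x x'))
    (hone : ∀ (x x' : X), α (1 : G) x x' = x')
    (hdist : ∀ (g h : G) (x x' x'' : X),
      α g (α h x x') (α h x x'') = α h x (α g x' x''))
    (g : G) :
    IsHomeomorph (fun x : X => α g x x) ∧
    (∀ x : X, α g⁻¹ (α g x x) (α g x x) = x) ∧
    (∀ x : X, α g (α g⁻¹ x x) (α g⁻¹ x x) = x) :=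
  delta_isHomeomorph_general α hcont hmul hone hdist g
end

section
/- Let G be a compact topological group and X a Hausdorff distributive binary G-space. Then the orbit projection π : X → X|G onto the quotient by the orbit equivalence relation is a closed map. -/
/-!
Distributivity makes `x ↦ α g x x` an invertible map with inverse `x ↦ α g⁻¹ x x`, so
`y ~ x ↔ ∃ g, x = α g y y` is an equivalence relation.  The saturation of a closed set `C` is then
`{y | ∃ g, α g y y ∈ C}`, the projection to `X` of a closed subset of `G × X`; since `G` is
compact this projection is closed.
-/

open Set

theorem Quot.mk_preimage_image_of_equivalence {X : Type*} {r : X → X → Prop}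
    (hr : Equivalence r) (C : Set X) :
    Quot.mk r ⁻¹' (Quot.mk r '' C) = {y | ∃ x ∈ C, r y x} := by
  ext y
  constructor
  · rintro ⟨x, hx, hxy⟩
    exact ⟨x, hx, hr.symm (hr.eqvGen_iff.mp (Quot.eq.mp hxy))⟩
  · rintro ⟨x, hx, hyx⟩
    exact ⟨x, hx, Quot.sound (hr.symm hyx)⟩

theorem isClosedMap_quot_mk_of_equivalence {X : Type*} [TopologicalSpace X] {r : X → X → Prop}
    (hr : Equivalence r) (hsat : ∀ C : Set X, IsClosed C → IsClosed {y | ∃ x ∈ C, r y x}) :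
    IsClosedMap (Quot.mk r) := fun C hC => by
  rw [← isQuotientMap_quot_mk.isClosed_preimage, Quot.mk_preimage_image_of_equivalence hr]
  exact hsat C hC

theorem isClosed_setOf_exists_mem_of_compactSpace {G X Y : Type*} [TopologicalSpace G]
    [CompactSpace G] [TopologicalSpace X] [TopologicalSpace Y] {f : G × X → Y}
    (hf : Continuous f) {C : Set Y} (hC : IsClosed C) :
    IsClosed {x | ∃ g, f (g, x) ∈ C} := by
  have hproj : {x | ∃ g, f (g, x) ∈ C} = Prod.snd '' (f ⁻¹' C) := by
    ext x
    simp
  rw [hproj]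
  exact isClosedMap_snd_of_compactSpace _ (hC.preimage hf)

section DistributiveBinaryAction

variable {G X : Type*} [Group G] {α : G → X → X → X}
  (hmul : ∀ (g h : G) (x x' : X), α (g * h) x x' = α g x (α h x x'))
  (hone : ∀ (x x' : X), α (1 : G) x x' = x')
  (hdist : ∀ (g h : G) (x x' x'' : X),
    α g (α h x x') (α h x x'') = α h x (α g x' x''))
include hmul hone hdist

theorem diag_inv_diag (g : G) (x : X) : α g⁻¹ (α g x x) (α g x x) = x := by
  rw [hdist, ← hmul, mul_inv_cancel, hone]

theorem equivalence_exists_eq_diag : Equivalence fun x y : X => ∃ g : G, y = α g x x where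
  refl x := ⟨1, (hone x x).symm⟩
  symm := by
    rintro x _ ⟨g, rfl⟩
    exact ⟨g⁻¹, (diag_inv_diag hmul hone hdist g x).symm⟩
  trans := by
    rintro x _ _ ⟨g, rfl⟩ ⟨h, rfl⟩
    exact ⟨g * h, by rw [hdist h g, hmul]⟩

end DistributiveBinaryAction

theorem orbit_projection_isClosedMap_general
    {G X : Type*} [Group G] [TopologicalSpace G]
    [CompactSpace G] [TopologicalSpace X]
    (α : G → X → X → X)
    (hcont : Continuous fun p : G × X × X => α p.1 p.2.1 p.2.2)
    (hmul : ∀ (g h : G) (x x' : X), α (g * h) x x' = α g x (α h x x'))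
    (hone : ∀ (x x' : X), α (1 : G) x x' = x')
    (hdist : ∀ (g h : G) (x x' x'' : X),
      α g (α h x x') (α h x x'') = α h x (α g x' x'')) :
    IsClosedMap (Quot.mk (fun x y : X => ∃ g : G, y = α g x x)) := by
  refine isClosedMap_quot_mk_of_equivalence (equivalence_exists_eq_diag hmul hone hdist)
    fun C hC => ?_
  have hdiag : Continuous fun p : G × X => α p.1 p.2 p.2 :=
    hcont.comp (continuous_fst.prodMk (continuous_snd.prodMk continuous_snd))
  have hsat : {y | ∃ x ∈ C, ∃ g : G, x = α g y y} = {y | ∃ g, α g y y ∈ C} := by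
    ext y
    simp
  rw [hsat]
  exact isClosed_setOf_exists_mem_of_compactSpace hdiag hC

/-- For a compact group `G` and a Hausdorff distributive binary `G`-space `X`,
the orbit projection `π : X → X|G` is a closed map. -/
theorem orbit_projection_isClosedMap
    {G X : Type*} [Group G] [TopologicalSpace G] [IsTopologicalGroup G]
    [CompactSpace G] [TopologicalSpace X] [T2Space X]
    (α : G → X → X → X)
    (hcont : Continuous fun p : G × X × X => α p.1 p.2.1 p.2.2)
    (hmul : ∀ (g h : G) (x x' : X), α (g * h) x x' = α g x (α h x x'))
    (hone : ∀ (x x' : X), α (1 : G) x x' = x')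
    (hdist : ∀ (g h : G) (x x' x'' : X),
      α g (α h x x') (α h x x'') = α h x (α g x' x'')) :
    IsClosedMap (Quot.mk (fun x y : X => ∃ g : G, y = α g x x)) :=
  orbit_projection_isClosedMap_general α hcont hmul hone hdist
end
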